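/- Let η_1,…,η_m > 0, 𝔹 = ∏_{i=1}^m [−η_i/2, η_i/2], and let D = ∏_{i=1}^m D_i ⊆ ℝ^m be a coordinate cone, i.e. each D_i ∈ {{0}, [0,∞), (−∞,0], ℝ}. Then for every set K ⊆ ℝ^m and every sign vector s ∈ {+,−,0}^m: K ∩ (𝔹 − D) ∩ Int(𝔹_s) ≠ ∅ if and only if (K ∩ Int(𝔹_s) ≠ ∅ and σ_s ⊆ −D). In particular, Int(𝔹_s) ∩ (𝔹 − D) ≠ ∅ ⟺ Int(𝔹_s) ⊆ 𝔹 − D ⟺ σ_s ⊆ −D. -/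

import Mathlib

open Pointwise

noncomputable section

/-- The box `𝔹 = ∏ᵢ [−η_i/2, η_i/2]`. -/
def boxB {m : ℕ} (η : Fin m → ℝ) : Set (Fin m → ℝ) :=
  {x | ∀ i, -(η i) / 2 ≤ x i ∧ x i ≤ η i / 2}

/-- The coordinate cone `σ_s` associated to a sign vector `s`. -/
def sigmaCone {m : ℕ} (s : Fin m → SignType) : Set (Fin m → ℝ) :=
  {x | ∀ i, (s i = 1 → 0 ≤ x i) ∧ (s i = -1 → x i ≤ 0) ∧ (s i = 0 → x i = 0)}

/-- The shift `δ_s`. -/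
def deltaS {m : ℕ} (η : Fin m → ℝ) (s : Fin m → SignType) : Fin m → ℝ :=
  fun i => (s i : ℝ) * η i

/-- The thick cone `𝔹_s = 𝔹 + σ_s + δ_s`. -/
def thickCone {m : ℕ} (η : Fin m → ℝ) (s : Fin m → SignType) :
    Set (Fin m → ℝ) :=
  {x | ∃ bb ∈ boxB η, ∃ c ∈ sigmaCone s, x = bb + c + deltaS η s}


/-! The thick cone `𝔹_s = 𝔹 + σ_s + δ_s` lies in `𝔹 − D` as soon as `σ_s ⊆ −D`, because
`δ_s ∈ σ_s` and `σ_s` is closed under addition; and its interior contains `δ_s`.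
Conversely, a point `b − d` of `Int 𝔹_s` with `b ∈ 𝔹`, `d ∈ D` satisfies `s_i (b_i − d_i) > η_i / 2`
whenever `s_i ≠ 0`, so `d_i ≠ 0` has the sign of `−s_i`; as `D_i` is closed under nonnegative
scaling, it then contains the whole ray `−σ_{s_i}`. -/

theorem mem_interior_of_mem_interior_subset_eval_preimage {ι : Type*} {X : ι → Type*}
    [∀ i, TopologicalSpace (X i)] {T : Set (∀ i, X i)} {i : ι} {S : Set (X i)}
    (hT : T ⊆ Function.eval i ⁻¹' S) {x : ∀ i, X i} (hx : x ∈ interior T) :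
    x i ∈ interior S :=
  (isOpenMap_eval i).interior_preimage_subset_preimage_interior (interior_mono hT hx)

theorem mem_of_mul_nonneg_of_mul_closed {D : Set ℝ}
    (hD : ∀ c : ℝ, 0 ≤ c → ∀ d ∈ D, c * d ∈ D) {d t : ℝ} (hd : d ∈ D) (hd0 : d ≠ 0)
    (htd : 0 ≤ t * d) : t ∈ D := by
  have hc : 0 ≤ t / d := div_nonneg_iff.2 (mul_nonneg_iff.1 htd)
  simpa [div_mul_cancel₀ t hd0] using hD _ hc d hd

theorem mul_mem_of_coordinate_cone {D : Set ℝ}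
    (hD : D = {0} ∨ D = Set.Ici 0 ∨ D = Set.Iic 0 ∨ D = Set.univ) {c d : ℝ} (hc : 0 ≤ c)
    (hd : d ∈ D) : c * d ∈ D := by
  rcases hD with rfl | rfl | rfl | rfl
  · simp_all
  · exact mul_nonneg hc hd
  · exact mul_nonpos_of_nonneg_of_nonpos hc hd
  · trivial

section ThickCone

variable {m : ℕ} {η : Fin m → ℝ} {s : Fin m → SignType}

def boxSubCone (η : Fin m → ℝ) (D : Fin m → Set ℝ) : Set (Fin m → ℝ) :=
  {x | ∃ bb ∈ boxB η, ∃ d : Fin m → ℝ, (∀ i, d i ∈ D i) ∧ x = bb - d}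

theorem add_mem_sigmaCone {x y : Fin m → ℝ} (hx : x ∈ sigmaCone s) (hy : y ∈ sigmaCone s) :
    x + y ∈ sigmaCone s := fun i =>
  ⟨fun h => add_nonneg ((hx i).1 h) ((hy i).1 h),
    fun h => add_nonpos ((hx i).2.1 h) ((hy i).2.1 h),
    fun h => by simp [(hx i).2.2 h, (hy i).2.2 h]⟩

theorem deltaS_mem_sigmaCone (hη : ∀ i, 0 ≤ η i) : deltaS η s ∈ sigmaCone s := fun i =>
  ⟨fun h => by simp [deltaS, h, hη i], fun h => by simp [deltaS, h, hη i],
    fun h => by simp [deltaS, h]⟩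

theorem thickCone_subset_boxSubCone (hη : ∀ i, 0 ≤ η i) {D : Fin m → Set ℝ}
    (hσ : sigmaCone s ⊆ {x | ∀ i, -x i ∈ D i}) : thickCone η s ⊆ boxSubCone η D := by
  rintro _ ⟨bb, hbb, c, hc, rfl⟩
  refine ⟨bb, hbb, -(c + deltaS η s), fun i => ?_, by abel⟩
  simpa using hσ (add_mem_sigmaCone hc (deltaS_mem_sigmaCone hη)) i

theorem deltaS_mem_interior_thickCone (hη : ∀ i, 0 < η i) :
    deltaS η s ∈ interior (thickCone η s) := by
  let U : Set (Fin m → ℝ) :=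
    Set.univ.pi fun i => Set.Ioo (deltaS η s i - η i / 2) (deltaS η s i + η i / 2)
  have hU : IsOpen U := isOpen_set_pi Set.finite_univ fun _ _ => isOpen_Ioo
  have hδU : deltaS η s ∈ U := fun i _ => ⟨by linarith [hη i], by linarith [hη i]⟩
  have hUsub : U ⊆ thickCone η s := fun x hx =>
    ⟨x - deltaS η s, fun i => by
      simp only [Pi.sub_apply]
      constructor <;> linarith [(hx i trivial).1, (hx i trivial).2],
      0, fun i => by simp, by abel⟩
  exact mem_interior.2 ⟨U, hUsub, hU, hδU⟩

theorem half_lt_of_mem_interior_thickCone {x : Fin m → ℝ} (hx : x ∈ interior (thickCone η s))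
    {i : Fin m} (hi : s i = 1) : η i / 2 < x i := by
  have hT : thickCone η s ⊆ Function.eval i ⁻¹' Set.Ici (η i / 2) := by
    rintro _ ⟨bb, hbb, c, hc, rfl⟩
    simp only [Set.mem_preimage, Function.eval, Pi.add_apply, deltaS, hi, Set.mem_Ici,
      SignType.coe_one, one_mul]
    linarith [(hbb i).1, (hc i).1 hi]
  simpa using mem_interior_of_mem_interior_subset_eval_preimage hT hx

theorem lt_neg_half_of_mem_interior_thickCone {x : Fin m → ℝ}
    (hx : x ∈ interior (thickCone η s)) {i : Fin m} (hi : s i = -1) : x i < -(η i) / 2 := by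
  have hT : thickCone η s ⊆ Function.eval i ⁻¹' Set.Iic (-(η i) / 2) := by
    rintro _ ⟨bb, hbb, c, hc, rfl⟩
    simp only [Set.mem_preimage, Function.eval, Pi.add_apply, deltaS, hi, Set.mem_Iic,
      SignType.coe_neg_one, neg_one_mul]
    linarith [(hbb i).2, (hc i).2.1 hi]
  simpa using mem_interior_of_mem_interior_subset_eval_preimage hT hx

theorem sigmaCone_subset_of_mem_interior_thickCone {D : Fin m → Set ℝ}
    (hD : ∀ i, ∀ c : ℝ, 0 ≤ c → ∀ d ∈ D i, c * d ∈ D i) {x : Fin m → ℝ}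
    (hx : x ∈ interior (thickCone η s)) (hxD : x ∈ boxSubCone η D) :
    sigmaCone s ⊆ {x | ∀ i, -x i ∈ D i} := by
  obtain ⟨bb, hbb, d, hd, rfl⟩ := hxD
  intro y hy i
  rcases (s i).trichotomy with hi | hi | hi
  · have hdi : 0 < d i := by
      have hxi := lt_neg_half_of_mem_interior_thickCone hx hi
      rw [Pi.sub_apply] at hxi
      linarith [(hbb i).1]
    exact mem_of_mul_nonneg_of_mul_closed (hD i) (hd i) hdi.ne'
      (mul_nonneg (neg_nonneg.2 ((hy i).2.1 hi)) hdi.le)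
  · simpa [(hy i).2.2 hi] using hD i 0 le_rfl (d i) (hd i)
  · have hdi : d i < 0 := by
      have hxi := half_lt_of_mem_interior_thickCone hx hi
      rw [Pi.sub_apply] at hxi
      linarith [(hbb i).2]
    exact mem_of_mul_nonneg_of_mul_closed (hD i) (hd i) hdi.ne
      (mul_nonneg_of_nonpos_of_nonpos (neg_nonpos.2 ((hy i).1 hi)) hdi.le)

end ThickCone

/-- **Lemma.** Let `𝔹` be the box and `D = ∏ᵢ D_i` a coordinate cone (each
`D_i ∈ {{0}, [0,∞), (−∞,0], ℝ}`).  Then for every `K ⊆ ℝ^m` and sign vector `s`: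
`K ∩ (𝔹 − D) ∩ Int(𝔹_s) ≠ ∅` iff (`K ∩ Int(𝔹_s) ≠ ∅` and `σ_s ⊆ −D`); in
particular `Int(𝔹_s) ∩ (𝔹 − D) ≠ ∅` iff `Int(𝔹_s) ⊆ 𝔹 − D` iff `σ_s ⊆ −D`. -/
theorem box_minus_cone_meets_interior_thick_cone
    {m : ℕ} (η : Fin m → ℝ) (hη : ∀ i, 0 < η i)
    (D : Fin m → Set ℝ)
    (hD : ∀ i, D i = {0} ∨ D i = Set.Ici (0 : ℝ) ∨ D i = Set.Iic (0 : ℝ) ∨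
      D i = Set.univ)
    (K : Set (Fin m → ℝ)) (s : Fin m → SignType) :
    ((K ∩ {x | ∃ bb ∈ boxB η, ∃ d : Fin m → ℝ, (∀ i, d i ∈ D i) ∧ x = bb - d} ∩
          interior (thickCone η s)).Nonempty ↔
        ((K ∩ interior (thickCone η s)).Nonempty ∧
          sigmaCone s ⊆ {x | ∀ i, -x i ∈ D i})) ∧
    ((interior (thickCone η s) ∩
          {x | ∃ bb ∈ boxB η, ∃ d : Fin m → ℝ, (∀ i, d i ∈ D i) ∧ x = bb - d}).Nonempty ↔
        interior (thickCone η s) ⊆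
          {x | ∃ bb ∈ boxB η, ∃ d : Fin m → ℝ, (∀ i, d i ∈ D i) ∧ x = bb - d}) ∧
    ((interior (thickCone η s) ∩
          {x | ∃ bb ∈ boxB η, ∃ d : Fin m → ℝ, (∀ i, d i ∈ D i) ∧ x = bb - d}).Nonempty ↔
        sigmaCone s ⊆ {x | ∀ i, -x i ∈ D i}) := by
  have hne : (interior (thickCone η s)).Nonempty := ⟨_, deltaS_mem_interior_thickCone hη⟩
  have hsub (hσ : sigmaCone s ⊆ {x | ∀ i, -x i ∈ D i}) :
      interior (thickCone η s) ⊆ boxSubCone η D :=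
    interior_subset.trans (thickCone_subset_boxSubCone (fun i => (hη i).le) hσ)
  have hσ {x : Fin m → ℝ} (hx : x ∈ interior (thickCone η s)) (hxD : x ∈ boxSubCone η D) :
      sigmaCone s ⊆ {x | ∀ i, -x i ∈ D i} :=
    sigmaCone_subset_of_mem_interior_thickCone
      (fun i _ hc _ hd => mul_mem_of_coordinate_cone (hD i) hc hd) hx hxD
  refine ⟨⟨?_, ?_⟩, ⟨?_, ?_⟩, ⟨?_, ?_⟩⟩
  · rintro ⟨x, ⟨hxK, hxD⟩, hx⟩
    exact ⟨⟨x, hxK, hx⟩, hσ hx hxD⟩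
  · rintro ⟨⟨x, hxK, hx⟩, h⟩
    exact ⟨x, ⟨hxK, hsub h hx⟩, hx⟩
  · rintro ⟨x, hx, hxD⟩
    exact hsub (hσ hx hxD)
  · intro h
    exact hne.mono fun x hx => ⟨hx, h hx⟩
  · rintro ⟨x, hx, hxD⟩
    exact hσ hx hxD
  · intro h
    exact hne.mono fun x hx => ⟨hx, hsub h hx⟩
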